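/- For any property graphs G1 and G2, the graph edit distance GED(G1,G2) equals the minimum of cost(h) taken over all partial isomorphisms h between G1 and G2 (this minimum exists, since the empty partial map is a partial isomorphism). -/

import Mathlib

/-!
Property graphs, homomorphisms/isomorphisms/subgraphs, edit operations,
edit scripts, canonical scripts, graph edit distance, partial isomorphisms
and their cost, and the edit-script rewriting system of the paper
"Flexible graph matching and graph edit distance using answer set programming".
-/

universe u v w z

variable {ι : Type u} {L : Type v} {K : Type w} {D : Type z}

/-- A raw property-graph structure: finite sets of node and edge identifiers,
partial source/target/label functions (modelled via `Option`), and a partial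
key-value property assignment. -/
structure PreGraph (ι : Type u) (L : Type v) (K : Type w) (D : Type z) where
  V : Finset ι
  E : Finset ι
  src : ι → Option ι
  tgt : ι → Option ι
  lab : ι → Option L
  prop : ι → K → Option D

section Graphs

variable [DecidableEq ι]

/-- The invariants making a raw structure an actual property graph:
nodes and edges are disjoint, sources and targets are defined exactly on
edges and map into the node set, labels are defined exactly on nodes and
edges, and properties are defined only on nodes and edges. -/
structure IsPGraph (G : PreGraph ι L K D) : Prop where
  disj : Disjoint G.V G.E
  src_dom : ∀ e, (G.src e).isSome ↔ e ∈ G.E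
  tgt_dom : ∀ e, (G.tgt e).isSome ↔ e ∈ G.E
  src_mem : ∀ e v, G.src e = some v → v ∈ G.V
  tgt_mem : ∀ e v, G.tgt e = some v → v ∈ G.V
  lab_dom : ∀ x, (G.lab x).isSome ↔ x ∈ G.V ∪ G.E
  prop_dom : ∀ x k, (G.prop x k).isSome → x ∈ G.V ∪ G.E

/-- A homomorphism of property graphs (represented by a total function on
identifiers): maps nodes to nodes and edges to edges preserving labels,
sources, targets, and all defined properties. -/
structure IsHom (G1 G2 : PreGraph ι L K D) (h : ι → ι) : Prop where
  map_V : ∀ v ∈ G1.V, h v ∈ G2.V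
  map_E : ∀ e ∈ G1.E, h e ∈ G2.E
  lab_eq : ∀ x ∈ G1.V ∪ G1.E, G2.lab (h x) = G1.lab x
  src_eq : ∀ e ∈ G1.E, ∀ v, G1.src e = some v → G2.src (h e) = some (h v)
  tgt_eq : ∀ e ∈ G1.E, ∀ v, G1.tgt e = some v → G2.tgt (h e) = some (h v)
  prop_eq : ∀ x ∈ G1.V ∪ G1.E, ∀ k d, G1.prop x k = some d → G2.prop (h x) k = some d

/-- An isomorphism of property graphs: an invertible homomorphism whose
inverse is also a homomorphism. -/
def IsIso (G1 G2 : PreGraph ι L K D) (h : ι → ι) : Prop :=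
  IsHom G1 G2 h ∧ ∃ g : ι → ι, IsHom G2 G1 g ∧
    (∀ x ∈ G1.V ∪ G1.E, g (h x) = x) ∧ (∀ y ∈ G2.V ∪ G2.E, h (g y) = y)

/-- `G'` is a subgraph of `G`: `G'` is itself a property graph, its nodes and
edges are among those of `G`, and sources, targets, labels and defined
properties agree with those of `G`. -/
def IsSubgraph (G' G : PreGraph ι L K D) : Prop :=
  IsPGraph G' ∧ G'.V ⊆ G.V ∧ G'.E ⊆ G.E ∧
  (∀ e ∈ G'.E, G'.src e = G.src e ∧ G'.tgt e = G.tgt e) ∧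
  (∀ x ∈ G'.V ∪ G'.E, G'.lab x = G.lab x) ∧
  (∀ x k d, G'.prop x k = some d → G.prop x k = some d)

end Graphs

/-- The seven edit operations on property graphs. -/
inductive EditOp (ι : Type u) (L : Type v) (K : Type w) (D : Type z) where
  | insV (v : ι) (l : L)
  | insE (e v w : ι) (l : L)
  | insP (x : ι) (k : K) (d : D)
  | delV (v : ι)
  | delE (e : ι)
  | delP (x : ι) (k : K)
  | updP (x : ι) (k : K) (d : D)

section Edits

variable [DecidableEq ι] [DecidableEq K]

/-- The precondition of an edit operation on a graph. -/
def Applicable (op : EditOp ι L K D) (G : PreGraph ι L K D) : Prop :=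
  match op with
  | .insV v _ => v ∉ G.V ∪ G.E
  | .insE e v w _ => v ∈ G.V ∧ w ∈ G.V ∧ e ∉ G.V ∪ G.E
  | .insP x k _ => x ∈ G.V ∪ G.E ∧ G.prop x k = none
  | .delV v => v ∈ G.V ∧ (∀ e ∈ G.E, G.src e ≠ some v ∧ G.tgt e ≠ some v) ∧
      (∀ k, G.prop v k = none)
  | .delE e => e ∈ G.E ∧ (∀ k, G.prop e k = none)
  | .delP x k => (G.prop x k).isSome
  | .updP x k _ => (G.prop x k).isSome

/-- The effect of an edit operation on a graph. -/
def applyOp (op : EditOp ι L K D) (G : PreGraph ι L K D) : PreGraph ι L K D :=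
  match op with
  | .insV v l =>
      { G with
        V := (insert v G.V)
        lab := fun x => if x = v then some l else G.lab x }
  | .insE e v w l =>
      { G with
        E := (insert e G.E)
        src := fun x => if x = e then some v else G.src x
        tgt := fun x => if x = e then some w else G.tgt x
        lab := fun x => if x = e then some l else G.lab x }
  | .insP x k d =>
      { G with prop := fun y k' => if y = x ∧ k' = k then some d else G.prop y k' }
  | .delV v =>
      { G with
        V := (G.V.erase v)
        lab := fun x => if x = v then none else G.lab x }
  | .delE e =>
      { G with
        E := (G.E.erase e)
        src := fun x => if x = e then none else G.src x
        tgt := fun x => if x = e then none else G.tgt x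
        lab := fun x => if x = e then none else G.lab x }
  | .delP x k =>
      { G with prop := fun y k' => if y = x ∧ k' = k then none else G.prop y k' }
  | .updP x k d =>
      { G with prop := fun y k' => if y = x ∧ k' = k then some d else G.prop y k' }

/-- An edit script is valid on `G` if each operation is applicable in the
graph produced by the preceding ones. -/
inductive ValidScript : PreGraph ι L K D → List (EditOp ι L K D) → Prop where
  | nil (G : PreGraph ι L K D) : ValidScript G []
  | cons {G : PreGraph ι L K D} {op : EditOp ι L K D} {ops : List (EditOp ι L K D)} :
      Applicable op G → ValidScript (applyOp op G) ops → ValidScript G (op :: ops)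

/-- The result `ops(G)` of applying an edit script in order. -/
def applyScript (ops : List (EditOp ι L K D)) (G : PreGraph ι L K D) : PreGraph ι L K D :=
  ops.foldl (fun g op => applyOp op g) G

/-- A canonical edit script: property deletions, then edge deletions, then
node deletions, then property updates, then node insertions, then edge
insertions, then property insertions. -/
def Canonical (ops : List (EditOp ι L K D)) : Prop :=
  ∃ dp de dv up iv ie ip : List (EditOp ι L K D),
    ops = dp ++ de ++ dv ++ up ++ iv ++ ie ++ ip ∧
    (∀ op ∈ dp, ∃ x k, op = EditOp.delP x k) ∧
    (∀ op ∈ de, ∃ e, op = EditOp.delE e) ∧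
    (∀ op ∈ dv, ∃ v, op = EditOp.delV v) ∧
    (∀ op ∈ up, ∃ x k d, op = EditOp.updP x k d) ∧
    (∀ op ∈ iv, ∃ v l, op = EditOp.insV v l) ∧
    (∀ op ∈ ie, ∃ e v w l, op = EditOp.insE e v w l) ∧
    (∀ op ∈ ip, ∃ x k d, op = EditOp.insP x k d)

/-- The set of lengths of valid edit scripts transforming `G1` into a graph
isomorphic to `G2`. -/
def GEDSet (G1 G2 : PreGraph ι L K D) : Set ℕ :=
  {n | ∃ ops : List (EditOp ι L K D), ValidScript G1 ops ∧
        (∃ f : ι → ι, IsIso (applyScript ops G1) G2 f) ∧ ops.length = n}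

/-- The graph edit distance: the minimum length of a valid edit script
transforming `G1` into a graph isomorphic to `G2`. -/
noncomputable def GED (G1 G2 : PreGraph ι L K D) : ℕ :=
  sInf (GEDSet G1 G2)

/-- The number of defined properties of a graph. -/
def propCount [Fintype K] (G : PreGraph ι L K D) : ℕ :=
  ∑ x ∈ G.V ∪ G.E, (Finset.univ.filter fun k : K => (G.prop x k).isSome).card

end Edits

/-- A possibly-marked edit operation: the boolean records whether the
operation is marked (`op*`). -/
abbrev MOp (ι : Type u) (L : Type v) (K : Type w) (D : Type z) :=
  EditOp ι L K D × Bool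

/-- The edit-script rewrite rules of Figure 5 of the paper, acting on the
marked operation and the operation immediately following it. -/
inductive RewStep : List (MOp ι L K D) → List (MOp ι L K D) → Prop where
  | delE_delP (e x : ι) (k : K) :
      RewStep [(.delE e, true), (.delP x k, false)] [(.delP x k, false), (.delE e, true)]
  | delV_delP (v x : ι) (k : K) :
      RewStep [(.delV v, true), (.delP x k, false)] [(.delP x k, false), (.delV v, true)]
  | delV_delE (v e : ι) :
      RewStep [(.delV v, true), (.delE e, false)] [(.delE e, false), (.delV v, true)]
  | updP_delP_same (x : ι) (k : K) (d : D) :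
      RewStep [(.updP x k d, true), (.delP x k, false)] [(.delP x k, false)]
  | updP_delP_ne (x y : ι) (k k' : K) (d : D) (h : ¬(x = y ∧ k = k')) :
      RewStep [(.updP x k d, true), (.delP y k', false)]
        [(.delP y k', false), (.updP x k d, true)]
  | updP_delE (x : ι) (k : K) (d : D) (e : ι) :
      RewStep [(.updP x k d, true), (.delE e, false)] [(.delE e, false), (.updP x k d, true)]
  | updP_delV (x : ι) (k : K) (d : D) (v : ι) :
      RewStep [(.updP x k d, true), (.delV v, false)] [(.delV v, false), (.updP x k d, true)]
  | insV_delP (v : ι) (l : L) (x : ι) (k : K) :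
      RewStep [(.insV v l, true), (.delP x k, false)] [(.delP x k, false), (.insV v l, true)]
  | insV_delE (v : ι) (l : L) (e : ι) :
      RewStep [(.insV v l, true), (.delE e, false)] [(.delE e, false), (.insV v l, true)]
  | insV_delV_same (v : ι) (l : L) :
      RewStep [(.insV v l, true), (.delV v, false)] []
  | insV_delV_ne (v : ι) (l : L) (v' : ι) (h : v ≠ v') :
      RewStep [(.insV v l, true), (.delV v', false)] [(.delV v', false), (.insV v l, true)]
  | insV_updP (v : ι) (l : L) (x : ι) (k : K) (d : D) :
      RewStep [(.insV v l, true), (.updP x k d, false)]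
        [(.updP x k d, false), (.insV v l, true)]
  | insE_delP (e v w : ι) (l : L) (x : ι) (k : K) :
      RewStep [(.insE e v w l, true), (.delP x k, false)]
        [(.delP x k, false), (.insE e v w l, true)]
  | insE_delE_same (e v w : ι) (l : L) :
      RewStep [(.insE e v w l, true), (.delE e, false)] []
  | insE_delE_ne (e v w : ι) (l : L) (e' : ι) (h : e ≠ e') :
      RewStep [(.insE e v w l, true), (.delE e', false)]
        [(.delE e', false), (.insE e v w l, true)]
  | insE_delV (e v w : ι) (l : L) (v' : ι) :
      RewStep [(.insE e v w l, true), (.delV v', false)]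
        [(.delV v', false), (.insE e v w l, true)]
  | insE_updP (e v w : ι) (l : L) (x : ι) (k : K) (d : D) :
      RewStep [(.insE e v w l, true), (.updP x k d, false)]
        [(.updP x k d, false), (.insE e v w l, true)]
  | insE_insV (e v w : ι) (l : L) (v' : ι) (l' : L) :
      RewStep [(.insE e v w l, true), (.insV v' l', false)]
        [(.insV v' l', false), (.insE e v w l, true)]
  | insP_delP_same (x : ι) (k : K) (d : D) :
      RewStep [(.insP x k d, true), (.delP x k, false)] []
  | insP_delP_ne (x y : ι) (k k' : K) (d : D) (h : ¬(x = y ∧ k = k')) :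
      RewStep [(.insP x k d, true), (.delP y k', false)]
        [(.delP y k', false), (.insP x k d, true)]
  | insP_delE (x : ι) (k : K) (d : D) (e : ι) :
      RewStep [(.insP x k d, true), (.delE e, false)] [(.delE e, false), (.insP x k d, true)]
  | insP_delV (x : ι) (k : K) (d : D) (v : ι) :
      RewStep [(.insP x k d, true), (.delV v, false)] [(.delV v, false), (.insP x k d, true)]
  | insP_updP_same (x : ι) (k : K) (d d' : D) :
      RewStep [(.insP x k d, true), (.updP x k d', false)] [(.insP x k d', true)]
  | insP_updP_ne (x y : ι) (k k' : K) (d d' : D) (h : ¬(x = y ∧ k = k')) :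
      RewStep [(.insP x k d, true), (.updP y k' d', false)]
        [(.updP y k' d', false), (.insP x k d, true)]
  | insP_insV (x : ι) (k : K) (d : D) (v : ι) (l : L) :
      RewStep [(.insP x k d, true), (.insV v l, false)] [(.insV v l, false), (.insP x k d, true)]
  | insP_insE (x : ι) (k : K) (d : D) (e v w : ι) (l : L) :
      RewStep [(.insP x k d, true), (.insE e v w l, false)]
        [(.insE e v w l, false), (.insP x k d, true)]
  | unmark (op : EditOp ι L K D) :
      RewStep [(op, true)] [(op, false)]

/-- One rewrite step on a marked edit script: apply one of the rules at the
position of the marked operation (everything before it is unmarked). -/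
def Rew (m m' : List (MOp ι L K D)) : Prop :=
  ∃ pre a b post : List (MOp ι L K D),
    (∀ p ∈ pre, p.2 = false) ∧ RewStep a b ∧ m = pre ++ a ++ post ∧ m' = pre ++ b ++ post

/-- The `*`-length of a marked script: the length of the suffix beginning at
the (first) marked operation, or `0` if there is none. -/
def starLen : List (MOp ι L K D) → ℕ
  | [] => 0
  | (_, b) :: rest => if b then rest.length + 1 else starLen rest

section PartialIso

variable [DecidableEq ι]

/-- A partial isomorphism between two property graphs, represented as a
partial map on identifiers: injective, matching nodes to nodes and edges to
edges with equal labels, and matching the endpoints of matched edges. -/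
def IsPartialIso (G1 G2 : PreGraph ι L K D) (h : ι → Option ι) : Prop :=
  (∀ x y, h x = some y → (x ∈ G1.V ∧ y ∈ G2.V) ∨ (x ∈ G1.E ∧ y ∈ G2.E)) ∧
  (∀ x x' y, h x = some y → h x' = some y → x = x') ∧
  (∀ x y, h x = some y → G2.lab y = G1.lab x) ∧
  (∀ e e' v, h e = some e' → G1.src e = some v → h v = G2.src e') ∧
  (∀ e e' v, h e = some e' → G1.tgt e = some v → h v = G2.tgt e')

/-- The nodes and edges of `G1` left unmatched by `h`. -/
def unmatchedL (G1 : PreGraph ι L K D) (h : ι → Option ι) : Finset ι :=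
  (G1.V ∪ G1.E).filter fun x => h x = none

/-- The nodes and edges of `G2` left unmatched by `h`. -/
def unmatchedR (G1 G2 : PreGraph ι L K D) (h : ι → Option ι) : Finset ι :=
  (G2.V ∪ G2.E).filter fun y => ∀ x ∈ G1.V ∪ G1.E, h x ≠ some y

/-- The number of defined properties on a given object of a graph. -/
def propsOn [Fintype K] (G : PreGraph ι L K D) (x : ι) : ℕ :=
  (Finset.univ.filter fun k : K => (G.prop x k).isSome).card

/-- The number of keys at which the properties of a matched pair disagree
(defined with different values, or defined on only one side). -/
def mismatchCount [Fintype K] [DecidableEq D] (G1 G2 : PreGraph ι L K D) (x y : ι) : ℕ :=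
  (Finset.univ.filter fun k : K => G1.prop x k ≠ G2.prop y k).card

/-- The cost of a partial isomorphism: unmatched nodes and edges on both
sides, mismatched properties of matched pairs, and all properties on
unmatched objects of both sides. -/
def pisoCost [Fintype K] [DecidableEq D] (G1 G2 : PreGraph ι L K D) (h : ι → Option ι) : ℕ :=
  (unmatchedL G1 h).card + (unmatchedR G1 G2 h).card +
  (∑ x ∈ G1.V ∪ G1.E, (h x).elim 0 fun y => mismatchCount G1 G2 x y) +
  (∑ x ∈ unmatchedL G1 h, propsOn G1 x) +
  (∑ y ∈ unmatchedR G1 G2 h, propsOn G2 y)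

end PartialIso

/-!
Write `pisoCost` as a sum over objects: a node or edge of `G1` costs the number of keys at which
its properties differ from those of its partner (all its properties, if it has none), plus one
if it is unmatched; an unmatched object of `G2` costs its properties plus one.

An edit operation lowers the least such cost by at most one. A property edit changes one summand
by at most one. A property-free node or edge `x` contributes one while unmatched; matched to
`y`, it contributes the properties of `y`, one less than `y` costs when unmatched. As an
isomorphism has cost zero, a script of length `n` leaves a partial isomorphism of cost at most
`n` out of `G1`.

Conversely, a partial isomorphism of nonzero cost is lowered by some applicable edit: correct a
property; failing that, delete an unmatched edge, or an unmatched node, which is isolated once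
every edge is matched; failing that, insert a node, or an edge between matched nodes, as the
partner of an unmatched object of `G2`. Cost zero means isomorphism, so induction on the cost
yields a script of that length.
-/

open Finset Function

lemma card_filter_le_card_filter_add_one {α : Type*} [Fintype α] [DecidableEq α]
    {p q : α → Prop} [DecidablePred p] [DecidablePred q] (a : α)
    (hpq : ∀ b, b ≠ a → p b → q b) : #{b | p b} ≤ #{b | q b} + 1 :=
  calc #{b | p b} ≤ #(insert a ({b | q b} : Finset α)) := card_le_card fun b => by grind
    _ ≤ #{b | q b} + 1 := card_insert_le _ _

section PartialMaps

variable {h : ι → Option ι}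

lemma isPartialIso_none (G H : PreGraph ι L K D) : IsPartialIso G H fun _ => none := by
  simp [IsPartialIso]

open Classical in
noncomputable def partialInverse (h : ι → Option ι) (y : ι) : Option ι :=
  if hy : ∃ x, h x = some y then some hy.choose else none

lemma partialInverse_eq_some_iff (hinj : ∀ x x' y, h x = some y → h x' = some y → x = x')
    {x y : ι} : partialInverse h y = some x ↔ h x = some y := by
  unfold partialInverse
  split_ifs with hy
  · exact ⟨fun hx => Option.some_injective _ hx ▸ hy.choose_spec,
      fun hx => congrArg some (hinj _ _ _ hy.choose_spec hx)⟩
  · exact ⟨nofun, fun hx => (hy ⟨x, hx⟩).elim⟩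

end PartialMaps

section ObjCost

variable [Fintype K] [DecidableEq D]

/-- The number of keys at which the properties of `x` must be edited: towards those of its
partner if `x` is matched, and towards none at all if it is not. -/
def propMismatch (G H : PreGraph ι L K D) (h : ι → Option ι) (x : ι) : ℕ :=
  #{k | G.prop x k ≠ (h x).bind (H.prop · k)}

def objCost (G H : PreGraph ι L K D) (h : ι → Option ι) (x : ι) : ℕ :=
  propMismatch G H h x + if h x = none then 1 else 0

variable {G H : PreGraph ι L K D} {h : ι → Option ι}

lemma propMismatch_eq (x : ι) :
    propMismatch G H h x =
      (h x).elim 0 (mismatchCount G H x) + if h x = none then propsOn G x else 0 := by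
  cases hx : h x with
  | none => simp [propMismatch, propsOn, hx, Option.isSome_iff_ne_none]
  | some y => simp [propMismatch, mismatchCount, hx]

lemma objCost_eq_zero_iff {x : ι} :
    objCost G H h x = 0 ↔ h x ≠ none ∧ ∀ k, G.prop x k = (h x).bind (H.prop · k) := by
  simp [objCost, propMismatch, filter_eq_empty_iff, and_comm]

end ObjCost

section

variable [DecidableEq ι]

namespace IsPGraph

variable {G : PreGraph ι L K D}

lemma prop_eq_none (hG : IsPGraph G) {x : ι} (hx : x ∉ G.V ∪ G.E) (k : K) :
    G.prop x k = none :=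
  Option.not_isSome_iff_eq_none.mp fun h => hx (hG.prop_dom x k h)

lemma notMem_E (hG : IsPGraph G) {v : ι} (hv : v ∈ G.V) : v ∉ G.E :=
  disjoint_left.mp hG.disj hv

lemma exists_src_eq (hG : IsPGraph G) {e : ι} (he : e ∈ G.E) : ∃ v, G.src e = some v :=
  Option.isSome_iff_exists.mp ((hG.src_dom e).mpr he)

lemma exists_tgt_eq (hG : IsPGraph G) {e : ι} (he : e ∈ G.E) : ∃ v, G.tgt e = some v :=
  Option.isSome_iff_exists.mp ((hG.tgt_dom e).mpr he)

theorem applyOp [DecidableEq K] {op : EditOp ι L K D} (hG : IsPGraph G)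
    (hop : Applicable op G) : IsPGraph (applyOp op G) := by
  obtain ⟨disj, src_dom, tgt_dom, src_mem, tgt_mem, lab_dom, prop_dom⟩ := hG
  rw [disjoint_left] at disj
  cases op <;> simp only [Applicable] at hop <;> constructor <;>
    simp only [_root_.applyOp, disjoint_left] <;> grind

end IsPGraph

namespace IsPartialIso

variable {G H : PreGraph ι L K D} {h : ι → Option ι}

lemma mem_of_eq_some (hpi : IsPartialIso G H h) {x y : ι} (hxy : h x = some y) :
    x ∈ G.V ∪ G.E ∧ y ∈ H.V ∪ H.E := by
  rcases hpi.1 x y hxy with ⟨hx, hy⟩ | ⟨hx, hy⟩ <;> simp [hx, hy]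

lemma eq_none_of_notMem (hpi : IsPartialIso G H h) {x : ι} (hx : x ∉ G.V ∪ G.E) :
    h x = none :=
  Option.eq_none_iff_forall_ne_some.mpr fun _ hxy => hx (hpi.mem_of_eq_some hxy).1

lemma card_lt_of_mem_unmatchedR (hpi : IsPartialIso G H h)
    (htot : ∀ x ∈ G.V ∪ G.E, h x ≠ none) {y : ι} (hy : y ∈ unmatchedR G H h) :
    #(G.V ∪ G.E) < #(H.V ∪ H.E) := by
  obtain ⟨hyH, hyfree⟩ := mem_filter.mp hy
  have hmatch : ∀ x ∈ G.V ∪ G.E, h x = some ((h x).getD x) := fun x hx =>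
    (Option.getD_of_ne_none (htot x hx) x).symm
  calc #(G.V ∪ G.E) ≤ #((H.V ∪ H.E).erase y) := by
        refine card_le_card_of_injOn (fun x => (h x).getD x) (fun x hx => ?_)
          fun x hx x' hx' hxx' => ?_
        · exact mem_erase.mpr ⟨fun hy => hyfree x hx (hy ▸ hmatch x hx),
            (hpi.mem_of_eq_some (hmatch x hx)).2⟩
        · exact hpi.2.1 x x' _ (hmatch x hx)
            (by rw [hmatch x' hx']; exact congrArg some hxx'.symm)
    _ < #(H.V ∪ H.E) := card_erase_lt_of_mem hyH

lemma symm (hG : IsPGraph G) (hH : IsPGraph H) (hpi : IsPartialIso G H h) :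
    IsPartialIso H G (partialInverse h) := by
  obtain ⟨hdom, hinj, hlab, hsrc, htgt⟩ := hpi
  have hE : ∀ {e e'}, h e = some e' → e' ∈ H.E → e ∈ G.E := fun he he' =>
    ((hdom _ _ he).resolve_left fun hV => hH.notMem_E hV.2 he').1
  simp only [IsPartialIso, partialInverse_eq_some_iff hinj]
  refine ⟨fun y x hxy => (hdom x y hxy).imp And.symm And.symm,
    fun y y' x hy hy' => Option.some_injective _ (hy.symm.trans hy'),
    fun y x hxy => (hlab x y hxy).symm, fun e' e v' he hv' => ?_, fun e' e v' he hv' => ?_⟩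
  · obtain ⟨v, hv⟩ := hG.exists_src_eq (hE he ((hH.src_dom e').mp (by simp [hv'])))
    rw [hv, partialInverse_eq_some_iff hinj, hsrc e e' v he hv, hv']
  · obtain ⟨v, hv⟩ := hG.exists_tgt_eq (hE he ((hH.tgt_dom e').mp (by simp [hv'])))
    rw [hv, partialInverse_eq_some_iff hinj, htgt e e' v he hv, hv']

lemma isHom (hG : IsPGraph G) (hpi : IsPartialIso G H h)
    (htot : ∀ x ∈ G.V ∪ G.E, h x ≠ none)
    (hprop : ∀ x y, h x = some y → ∀ k d, G.prop x k = some d → H.prop y k = some d) :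
    IsHom G H fun x => (h x).getD x := by
  obtain ⟨hdom, -, hlab, hsrc, htgt⟩ := hpi
  have hmatch : ∀ x ∈ G.V ∪ G.E, h x = some ((h x).getD x) := fun x hx =>
    (Option.getD_of_ne_none (htot x hx) x).symm
  have hV : ∀ v ∈ G.V, h v = some ((h v).getD v) := fun v hv => hmatch v (mem_union_left _ hv)
  have hE : ∀ e ∈ G.E, h e = some ((h e).getD e) := fun e he => hmatch e (mem_union_right _ he)
  refine ⟨fun v hv => ?_, fun e he => ?_, fun x hx => hlab _ _ (hmatch x hx),
    fun e he v hv => ?_, fun e he v hv => ?_, fun x hx => hprop _ _ (hmatch x hx)⟩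
  · exact ((hdom _ _ (hV v hv)).resolve_right fun hE => hG.notMem_E hv hE.1).2
  · exact ((hdom _ _ (hE e he)).resolve_left fun hV => hG.notMem_E hV.1 he).2
  · exact (hsrc _ _ _ (hE e he) hv).symm.trans (hV v (hG.src_mem e v hv))
  · exact (htgt _ _ _ (hE e he) hv).symm.trans (hV v (hG.tgt_mem e v hv))

end IsPartialIso

section Isomorphisms

variable {G H : PreGraph ι L K D} {f : ι → ι}

lemma IsHom.map_mem (hf : IsHom G H f) {x : ι} (hx : x ∈ G.V ∪ G.E) : f x ∈ H.V ∪ H.E := by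
  rcases mem_union.mp hx with hx | hx
  · exact mem_union_left _ (hf.map_V x hx)
  · exact mem_union_right _ (hf.map_E x hx)

namespace IsIso

lemma prop_eq (hf : IsIso G H f) {x : ι} (hx : x ∈ G.V ∪ G.E) (k : K) :
    G.prop x k = H.prop (f x) k := by
  obtain ⟨hf, g, hg, hgf, -⟩ := hf
  cases hp : G.prop x k with
  | some d => exact (hf.prop_eq x hx k d hp).symm
  | none =>
    cases hq : H.prop (f x) k with
    | none => rfl
    | some d => simpa [hgf x hx, hp] using hg.prop_eq _ (hf.map_mem hx) k d hq

lemma isPartialIso (hG : IsPGraph G) (hf : IsIso G H f) :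
    IsPartialIso G H fun x => if x ∈ G.V ∪ G.E then some (f x) else none := by
  obtain ⟨hfh, g, -, hgf, -⟩ := hf
  have hsrc_dom := hG.src_dom
  have htgt_dom := hG.tgt_dom
  refine ⟨?_, ?_, ?_, ?_, ?_⟩ <;>
    grind [hfh.map_V, hfh.map_E, hfh.lab_eq, hfh.src_eq, hfh.tgt_eq, hG.src_mem, hG.tgt_mem]

end IsIso

end Isomorphisms

/-- `G'` arises from `G` by inserting the node or edge `x`, without properties. -/
structure AddsObject (G G' : PreGraph ι L K D) (x : ι) : Prop where
  mem : x ∈ G'.V ∪ G'.E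
  V_erase : G'.V.erase x = G.V
  E_erase : G'.E.erase x = G.E
  lab_eq : ∀ z, z ≠ x → G'.lab z = G.lab z
  src_eq : ∀ z, z ≠ x → G'.src z = G.src z
  tgt_eq : ∀ z, z ≠ x → G'.tgt z = G.tgt z
  prop_eq : G'.prop = G.prop

namespace AddsObject

variable {G G' H : PreGraph ι L K D} {x : ι} {h : ι → Option ι}

lemma notMem (hx : AddsObject G G' x) : x ∉ G.V ∪ G.E := by
  simp [← hx.V_erase, ← hx.E_erase]

lemma union_eq_insert (hx : AddsObject G G' x) : G'.V ∪ G'.E = insert x (G.V ∪ G.E) := by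
  rw [← hx.V_erase, ← hx.E_erase, ← erase_union_distrib, insert_erase hx.mem]

lemma V_subset (hx : AddsObject G G' x) : G.V ⊆ G'.V := hx.V_erase ▸ erase_subset _ _

lemma E_subset (hx : AddsObject G G' x) : G.E ⊆ G'.E := hx.E_erase ▸ erase_subset _ _

lemma isPartialIso_update_none (hG : IsPGraph G) (hx : AddsObject G G' x)
    (hpi : IsPartialIso G' H h) : IsPartialIso G H (update h x none) := by
  obtain ⟨hdom, hinj, hlab, hsrc, htgt⟩ := hpi
  refine ⟨?_, ?_, ?_, ?_, ?_⟩ <;> simp only [update_apply] <;>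
    grind [hx.V_erase, hx.E_erase, hx.lab_eq, hx.src_eq, hx.tgt_eq, hx.notMem, hG.src_mem,
      hG.tgt_mem]

lemma isPartialIso_of_isPartialIso (hx : AddsObject G G' x) (hpi : IsPartialIso G H h) :
    IsPartialIso G' H h := by
  obtain ⟨hdom, hinj, hlab, hsrc, htgt⟩ := hpi
  refine ⟨?_, hinj, ?_, ?_, ?_⟩ <;>
    grind [hx.V_subset, hx.E_subset, hx.lab_eq, hx.src_eq, hx.tgt_eq, hx.notMem]

lemma isPartialIso_update_some (hG : IsPGraph G) (hG' : IsPGraph G') (hx : AddsObject G G' x)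
    (hpi : IsPartialIso G H h) {y : ι} (hy : y ∈ unmatchedR G H h)
    (hxy : (x ∈ G'.V ∧ y ∈ H.V) ∨ (x ∈ G'.E ∧ y ∈ H.E)) (hlab : H.lab y = G'.lab x)
    (hsrc : ∀ v, G'.src x = some v → h v = H.src y)
    (htgt : ∀ v, G'.tgt x = some v → h v = H.tgt y) :
    IsPartialIso G' H (update h x (some y)) := by
  obtain ⟨hdom, hinj, hlab', hsrc', htgt'⟩ := hpi
  rw [unmatchedR, mem_filter] at hy
  have hdisj := disjoint_left.mp hG'.disj
  have hsrc_dom := hG'.src_dom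
  have htgt_dom := hG'.tgt_dom
  refine ⟨?_, ?_, ?_, ?_, ?_⟩ <;> simp only [update_apply] <;>
    grind [hx.V_subset, hx.E_subset, hx.lab_eq, hx.src_eq, hx.tgt_eq, hx.notMem, hG.src_mem,
      hG.tgt_mem, hG'.src_mem, hG'.tgt_mem]

end AddsObject

section EditOps

variable [DecidableEq K] {G : PreGraph ι L K D}

lemma addsObject_insV {v : ι} (l : L) (hv : v ∉ G.V ∪ G.E) :
    AddsObject G (applyOp (.insV v l) G) v := by
  simp only [mem_union, not_or] at hv
  exact ⟨by simp [applyOp], erase_insert hv.1, erase_eq_of_notMem hv.2,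
    fun _ hz => if_neg hz, fun _ _ => rfl, fun _ _ => rfl, rfl⟩

lemma addsObject_insE {e : ι} (u w : ι) (l : L) (he : e ∉ G.V ∪ G.E) :
    AddsObject G (applyOp (.insE e u w l) G) e := by
  simp only [mem_union, not_or] at he
  exact ⟨by simp [applyOp], erase_eq_of_notMem he.1, erase_insert he.2,
    fun _ hz => if_neg hz, fun _ hz => if_neg hz, fun _ hz => if_neg hz, rfl⟩

lemma addsObject_delV (hG : IsPGraph G) {v : ι} (hv : v ∈ G.V) :
    AddsObject (applyOp (.delV v) G) G v :=
  ⟨mem_union_left _ hv, rfl, erase_eq_of_notMem (hG.notMem_E hv),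
    fun _ hz => (if_neg hz).symm, fun _ _ => rfl, fun _ _ => rfl, rfl⟩

lemma addsObject_delE (hG : IsPGraph G) {e : ι} (he : e ∈ G.E) :
    AddsObject (applyOp (.delE e) G) G e :=
  ⟨mem_union_right _ he, erase_eq_of_notMem fun hv => hG.notMem_E hv he, rfl,
    fun _ hz => (if_neg hz).symm, fun _ hz => (if_neg hz).symm, fun _ hz => (if_neg hz).symm,
    rfl⟩

/-- The common effect of `insP`, `delP` and `updP`. -/
def setProp (G : PreGraph ι L K D) (x : ι) (k : K) (o : Option D) : PreGraph ι L K D :=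
  { G with prop := fun y k' => if y = x ∧ k' = k then o else G.prop y k' }

lemma exists_applyOp_eq_setProp {x : ι} {k : K} {o : Option D} (hx : x ∈ G.V ∪ G.E)
    (hne : G.prop x k ≠ o) : ∃ op, Applicable op G ∧ applyOp op G = setProp G x k o := by
  cases o with
  | none => exact ⟨.delP x k, Option.ne_none_iff_isSome.mp hne, rfl⟩
  | some d =>
    cases hp : G.prop x k with
    | none => exact ⟨.insP x k d, ⟨hx, hp⟩, rfl⟩
    | some _ => exact ⟨.updP x k d, by simp [Applicable, hp], rfl⟩

end EditOps

section Cost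

variable [Fintype K] [DecidableEq D] {G H : PreGraph ι L K D} {h : ι → Option ι}

lemma pisoCost_eq_sum :
    pisoCost G H h = ∑ x ∈ G.V ∪ G.E, objCost G H h x +
      ∑ y ∈ unmatchedR G H h, (propsOn H y + 1) := by
  simp only [pisoCost, objCost, propMismatch_eq, sum_add_distrib, unmatchedL, sum_filter,
    card_filter, ← card_eq_sum_ones]
  ring

lemma pisoCost_eq_zero_iff :
    pisoCost G H h = 0 ↔
      (∀ x ∈ G.V ∪ G.E, h x ≠ none ∧ ∀ k, G.prop x k = (h x).bind (H.prop · k)) ∧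
        unmatchedR G H h = ∅ := by
  simp [pisoCost_eq_sum, sum_eq_zero_iff, objCost_eq_zero_iff, eq_empty_iff_forall_notMem]

theorem isIso_of_pisoCost_eq_zero (hG : IsPGraph G) (hH : IsPGraph H)
    (hpi : IsPartialIso G H h) (hc : pisoCost G H h = 0) : ∃ f, IsIso G H f := by
  obtain ⟨hL, hR⟩ := pisoCost_eq_zero_iff.mp hc
  have hinv : ∀ {x y}, partialInverse h y = some x ↔ h x = some y :=
    partialInverse_eq_some_iff hpi.2.1
  have hprop : ∀ x y, h x = some y → ∀ k, G.prop x k = H.prop y k := fun x y hxy k => by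
    simpa [hxy] using (hL x (hpi.mem_of_eq_some hxy).1).2 k
  have hsurj : ∀ y ∈ H.V ∪ H.E, ∃ x, h x = some y := fun y hy => by
    by_contra! hne
    have : y ∈ unmatchedR G H h := mem_filter.mpr ⟨hy, fun x _ => hne x⟩
    simp [hR] at this
  refine ⟨fun x => (h x).getD x,
    hpi.isHom hG (fun x hx => (hL x hx).1) fun x y hxy k d hd => hprop x y hxy k ▸ hd,
    fun y => (partialInverse h y).getD y,
    (hpi.symm hG hH).isHom hH (fun y hy => ?_) (fun y x hyx k d hd => ?_),
    fun x hx => ?_, fun y hy => ?_⟩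
  · obtain ⟨x, hx⟩ := hsurj y hy
    simp [hinv.mpr hx]
  · rwa [hprop x y (hinv.mp hyx)]
  · obtain ⟨y, hy⟩ := Option.ne_none_iff_exists'.mp (hL x hx).1
    simp [hy, hinv.mpr hy]
  · obtain ⟨x, hx⟩ := hsurj y hy
    simp [hinv.mpr hx, hx]

theorem IsIso.exists_pisoCost_eq_zero (hG : IsPGraph G) {f : ι → ι} (hf : IsIso G H f) :
    ∃ h, IsPartialIso G H h ∧ pisoCost G H h = 0 := by
  refine ⟨_, hf.isPartialIso hG,
    pisoCost_eq_zero_iff.mpr ⟨fun x hx => by simp [hx, hf.prop_eq hx], ?_⟩⟩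
  obtain ⟨-, g, hg, -, hfg⟩ := hf
  refine eq_empty_of_forall_notMem fun y hy => ?_
  obtain ⟨hy, hne⟩ := mem_filter.mp hy
  exact hne (g y) (hg.map_mem hy) (by simp [hg.map_mem hy, hfg y hy])

namespace AddsObject

variable {G' : PreGraph ι L K D} {x : ι}

lemma objCost_eq (hx : AddsObject G G' x) : objCost G' H = objCost G H := by
  funext h z
  simp only [objCost, propMismatch, hx.prop_eq]

lemma pisoCost_of_eq_none (hG : IsPGraph G) (hx : AddsObject G G' x) (hhx : h x = none) :
    pisoCost G' H h = pisoCost G H h + 1 := by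
  have hR : unmatchedR G' H h = unmatchedR G H h := by
    ext y
    simp [unmatchedR, hx.union_eq_insert, hhx]
  have hcx : objCost G H h x = 1 := by
    simp [objCost, propMismatch, hhx, hG.prop_eq_none hx.notMem]
  rw [pisoCost_eq_sum, pisoCost_eq_sum, hR, hx.union_eq_insert, hx.objCost_eq,
    sum_insert hx.notMem, hcx]
  ring

lemma pisoCost_of_eq_some (hG : IsPGraph G) (hx : AddsObject G G' x) {h' : ι → Option ι}
    {y : ι} (hy : y ∈ unmatchedR G H h) (hxy : h' x = some y)
    (hh : ∀ z ∈ G.V ∪ G.E, h' z = h z) : pisoCost G' H h' + 1 = pisoCost G H h := by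
  have hR : unmatchedR G' H h' = (unmatchedR G H h).erase y := by
    ext b
    simp only [unmatchedR, hx.union_eq_insert, mem_filter, mem_erase, forall_mem_insert, hxy]
    grind
  have hcx : objCost G H h' x = propsOn H y := by
    simp only [objCost, propMismatch, propsOn, hxy, hG.prop_eq_none hx.notMem, Option.bind_some,
      reduceCtorEq, if_false, add_zero, ne_comm, Option.isSome_iff_ne_none]
  have hS : ∑ z ∈ G.V ∪ G.E, objCost G H h' z = ∑ z ∈ G.V ∪ G.E, objCost G H h z :=
    sum_congr rfl fun z hz => by simp only [objCost, propMismatch, hh z hz]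
  rw [pisoCost_eq_sum, pisoCost_eq_sum, hR, hx.union_eq_insert, hx.objCost_eq,
    sum_insert hx.notMem, hcx, hS, ← add_sum_erase _ _ hy]
  ring

lemma pisoCost_update_lt (hG : IsPGraph G) (hx : AddsObject G G' x) {y : ι}
    (hy : y ∈ unmatchedR G H h) : pisoCost G' H (update h x (some y)) < pisoCost G H h := by
  have := hx.pisoCost_of_eq_some hG hy (update_self x _ h)
    fun z hz => update_of_ne (ne_of_mem_of_not_mem hz hx.notMem) _ h
  omega

lemma exists_pisoCost_le (hG : IsPGraph G) (hx : AddsObject G G' x) {h' : ι → Option ι}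
    (hpi : IsPartialIso G' H h') :
    ∃ h, IsPartialIso G H h ∧ pisoCost G H h ≤ pisoCost G' H h' + 1 := by
  refine ⟨update h' x none, hx.isPartialIso_update_none hG hpi, ?_⟩
  cases hhx : h' x with
  | none =>
    rw [← hhx, update_eq_self, hx.pisoCost_of_eq_none hG hhx]
    omega
  | some y =>
    have hy : y ∈ unmatchedR G H (update h' x none) := by
      refine mem_filter.mpr ⟨(hpi.mem_of_eq_some hhx).2, fun z hz hzy => ?_⟩
      have hzx := ne_of_mem_of_not_mem hz hx.notMem
      rw [update_of_ne hzx] at hzy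
      exact hzx (hpi.2.1 z x y hzy hhx)
    have := hx.pisoCost_of_eq_some hG hy hhx
      fun z hz => (update_of_ne (ne_of_mem_of_not_mem hz hx.notMem) _ h').symm
    omega

end AddsObject

variable [DecidableEq K] {x : ι}

lemma pisoCost_setProp_add (k : K) (o : Option D) (hx : x ∈ G.V ∪ G.E) :
    pisoCost (setProp G x k o) H h + objCost G H h x =
      pisoCost G H h + objCost (setProp G x k o) H h x := by
  have hrest : ∀ z ∈ (G.V ∪ G.E).erase x, objCost (setProp G x k o) H h z = objCost G H h z :=
    fun z hz => by simp [objCost, propMismatch, setProp, ne_of_mem_erase hz]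
  rw [pisoCost_eq_sum, pisoCost_eq_sum]
  change ∑ z ∈ G.V ∪ G.E, _ + ∑ y ∈ unmatchedR G H h, _ + _ = _
  rw [← add_sum_erase _ _ hx, ← add_sum_erase _ _ hx, sum_congr rfl hrest]
  ring

lemma pisoCost_le_pisoCost_setProp_add_one (k : K) (o : Option D) (hx : x ∈ G.V ∪ G.E) :
    pisoCost G H h ≤ pisoCost (setProp G x k o) H h + 1 := by
  have hobj : objCost G H h x ≤ objCost (setProp G x k o) H h x + 1 := by
    have := card_filter_le_card_filter_add_one
      (p := fun k' => G.prop x k' ≠ (h x).bind (H.prop · k'))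
      (q := fun k' => (setProp G x k o).prop x k' ≠ (h x).bind (H.prop · k')) k
      fun k' hk' hne => by simpa [setProp, hk'] using hne
    simp only [objCost, propMismatch]
    omega
  have := pisoCost_setProp_add k o hx (H := H) (h := h)
  omega

lemma pisoCost_setProp_lt {k : K} (hx : x ∈ G.V ∪ G.E)
    (hk : G.prop x k ≠ (h x).bind (H.prop · k)) :
    pisoCost (setProp G x k ((h x).bind (H.prop · k))) H h < pisoCost G H h := by
  have hobj : objCost (setProp G x k ((h x).bind (H.prop · k))) H h x < objCost G H h x := by
    suffices propMismatch (setProp G x k ((h x).bind (H.prop · k))) H h x <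
        propMismatch G H h x by
      simp only [objCost]
      omega
    refine card_lt_card ((ssubset_iff_of_subset fun k' => ?_).mpr ⟨k, by simpa using hk, ?_⟩)
    · by_cases hk' : k' = k <;> simp [setProp, hk']
    · simp [setProp]
  have := pisoCost_setProp_add k ((h x).bind (H.prop · k)) hx (H := H) (h := h)
  omega

end Cost

section Scripts

variable [DecidableEq K] [Fintype K] [DecidableEq D] {G H : PreGraph ι L K D}
  {h : ι → Option ι}

lemma exists_pisoCost_le_of_applyOp (hG : IsPGraph G) {op : EditOp ι L K D}
    (hop : Applicable op G) {h' : ι → Option ι} (hpi : IsPartialIso (applyOp op G) H h') :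
    ∃ h, IsPartialIso G H h ∧ pisoCost G H h ≤ pisoCost (applyOp op G) H h' + 1 := by
  cases op with
  | insV v l => exact (addsObject_insV l hop).exists_pisoCost_le hG hpi
  | insE e u w l => exact (addsObject_insE u w l hop.2.2).exists_pisoCost_le hG hpi
  | insP x k d => exact ⟨h', hpi, pisoCost_le_pisoCost_setProp_add_one k (some d) hop.1⟩
  | delV v =>
    have hv := addsObject_delV hG hop.1
    exact ⟨h', hv.isPartialIso_of_isPartialIso hpi,
      (hv.pisoCost_of_eq_none (hG.applyOp hop) (hpi.eq_none_of_notMem hv.notMem)).le⟩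
  | delE e =>
    have he := addsObject_delE hG hop.1
    exact ⟨h', he.isPartialIso_of_isPartialIso hpi,
      (he.pisoCost_of_eq_none (hG.applyOp hop) (hpi.eq_none_of_notMem he.notMem)).le⟩
  | delP x k =>
    exact ⟨h', hpi, pisoCost_le_pisoCost_setProp_add_one k none (hG.prop_dom x k hop)⟩
  | updP x k d =>
    exact ⟨h', hpi, pisoCost_le_pisoCost_setProp_add_one k (some d) (hG.prop_dom x k hop)⟩

theorem exists_pisoCost_le_length (hG : IsPGraph G) {ops : List (EditOp ι L K D)}
    (hvs : ValidScript G ops) {f : ι → ι} (hf : IsIso (applyScript ops G) H f) :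
    ∃ h, IsPartialIso G H h ∧ pisoCost G H h ≤ ops.length := by
  induction hvs with
  | nil G =>
    obtain ⟨h, hpi, hc⟩ := hf.exists_pisoCost_eq_zero hG
    exact ⟨h, hpi, hc.le⟩
  | cons hop _ ih =>
    obtain ⟨h₁, hpi₁, hle₁⟩ := ih (hG.applyOp hop) hf
    obtain ⟨h₀, hpi₀, hle₀⟩ := exists_pisoCost_le_of_applyOp hG hop hpi₁
    exact ⟨h₀, hpi₀, by rw [List.length_cons]; omega⟩

def HasCostDecreasingEdit (G H : PreGraph ι L K D) (h : ι → Option ι) : Prop :=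
  ∃ op h', Applicable op G ∧ IsPartialIso (applyOp op G) H h' ∧
    pisoCost (applyOp op G) H h' < pisoCost G H h

lemma hasCostDecreasingEdit_of_delete (hG : IsPGraph G) (hpi : IsPartialIso G H h)
    {op : EditOp ι L K D} (hop : Applicable op G) {x : ι} (hx : AddsObject (applyOp op G) G x)
    (hhx : h x = none) : HasCostDecreasingEdit G H h := by
  have hG' := hG.applyOp hop
  have hpi' := hx.isPartialIso_update_none hG' hpi
  rw [update_eq_self_iff.mpr hhx.symm] at hpi'
  exact ⟨op, h, hop, hpi', by rw [hx.pisoCost_of_eq_none hG' hhx]; omega⟩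

lemma hasCostDecreasingEdit_of_eq_none (hG : IsPGraph G) (hH : IsPGraph H)
    (hpi : IsPartialIso G H h)
    (hprop : ∀ x ∈ G.V ∪ G.E, ∀ k, G.prop x k = (h x).bind (H.prop · k))
    {x : ι} (hx : x ∈ G.V ∪ G.E) (hhx : h x = none) : HasCostDecreasingEdit G H h := by
  obtain ⟨hdom, -, -, hsrc, htgt⟩ := id hpi
  have hnoprop : ∀ z ∈ G.V ∪ G.E, h z = none → ∀ k, G.prop z k = none :=
    fun z hz hhz k => by simpa [hhz] using hprop z hz k
  by_cases hE : ∃ e ∈ G.E, h e = none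
  · obtain ⟨e, he, hhe⟩ := hE
    exact hasCostDecreasingEdit_of_delete hG hpi (op := .delE e)
      ⟨he, hnoprop e (mem_union_right _ he) hhe⟩ (addsObject_delE hG he) hhe
  push Not at hE
  have hv : x ∈ G.V := (mem_union.mp hx).resolve_right fun hxE => hE x hxE hhx
  -- every edge is matched, and the endpoints of a matched edge are matched
  have hisolated : ∀ e ∈ G.E, G.src e ≠ some x ∧ G.tgt e ≠ some x := fun e he => by
    obtain ⟨e', he'⟩ := Option.ne_none_iff_exists'.mp (hE e he)
    have he'E : e' ∈ H.E := ((hdom e e' he').resolve_left fun hV => hG.notMem_E hV.1 he).2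
    obtain ⟨a, ha⟩ := hH.exists_src_eq he'E
    obtain ⟨b, hb⟩ := hH.exists_tgt_eq he'E
    exact ⟨fun hs => by simpa [hhx, ha] using hsrc e e' x he' hs,
      fun ht => by simpa [hhx, hb] using htgt e e' x he' ht⟩
  exact hasCostDecreasingEdit_of_delete hG hpi (op := .delV x)
    ⟨hv, hisolated, hnoprop x hx hhx⟩ (addsObject_delV hG hv) hhx

lemma hasCostDecreasingEdit_of_insV (hG : IsPGraph G) (hH : IsPGraph H)
    (hpi : IsPartialIso G H h) {x : ι} (hx : x ∉ G.V ∪ G.E) {y : ι}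
    (hy : y ∈ unmatchedR G H h) (hyV : y ∈ H.V) : HasCostDecreasingEdit G H h := by
  obtain ⟨l, hl⟩ := Option.isSome_iff_exists.mp ((hH.lab_dom y).mpr (mem_union_left _ hyV))
  have hop : Applicable (.insV x l) G := hx
  have hxo := addsObject_insV l hx
  have hxE : x ∉ G.E := fun hxE => hx (mem_union_right _ hxE)
  have hsrc : (applyOp (.insV x l) G).src x = none :=
    Option.not_isSome_iff_eq_none.mp fun hs => hxE ((hG.src_dom x).mp hs)
  have htgt : (applyOp (.insV x l) G).tgt x = none :=
    Option.not_isSome_iff_eq_none.mp fun ht => hxE ((hG.tgt_dom x).mp ht)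
  exact ⟨_, _, hop, hxo.isPartialIso_update_some hG (hG.applyOp hop) hpi hy
    (.inl ⟨by simp [applyOp], hyV⟩) (by simp [applyOp, hl]) (by simp [hsrc]) (by simp [htgt]),
    hxo.pisoCost_update_lt hG hy⟩

lemma hasCostDecreasingEdit_of_insE (hG : IsPGraph G) (hH : IsPGraph H)
    (hpi : IsPartialIso G H h) (hV : ∀ a ∈ unmatchedR G H h, a ∉ H.V) {x : ι}
    (hx : x ∉ G.V ∪ G.E) {y : ι} (hy : y ∈ unmatchedR G H h) (hyE : y ∈ H.E) :
    HasCostDecreasingEdit G H h := by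
  have hmatched : ∀ a ∈ H.V, ∃ u ∈ G.V, h u = some a := fun a ha => by
    have : ¬∀ z ∈ G.V ∪ G.E, h z ≠ some a := fun hfree =>
      hV a (mem_filter.mpr ⟨mem_union_left _ ha, hfree⟩) ha
    push Not at this
    obtain ⟨u, -, hua⟩ := this
    exact ⟨u, ((hpi.1 u a hua).resolve_right fun hE => hH.notMem_E ha hE.2).1, hua⟩
  obtain ⟨a, ha⟩ := hH.exists_src_eq hyE
  obtain ⟨b, hb⟩ := hH.exists_tgt_eq hyE
  obtain ⟨u, hu, hua⟩ := hmatched a (hH.src_mem y a ha)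
  obtain ⟨w, hw, hwb⟩ := hmatched b (hH.tgt_mem y b hb)
  obtain ⟨l, hl⟩ := Option.isSome_iff_exists.mp ((hH.lab_dom y).mpr (mem_union_right _ hyE))
  have hop : Applicable (.insE x u w l) G := ⟨hu, hw, hx⟩
  have hxo := addsObject_insE u w l hx
  exact ⟨_, _, hop, hxo.isPartialIso_update_some hG (hG.applyOp hop) hpi hy
    (.inr ⟨by simp [applyOp], hyE⟩) (by simp [applyOp, hl])
    (by simp [applyOp, hua, ha]) (by simp [applyOp, hwb, hb]), hxo.pisoCost_update_lt hG hy⟩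

lemma hasCostDecreasingEdit_of_unmatchedR_nonempty (hG : IsPGraph G) (hH : IsPGraph H)
    (hpi : IsPartialIso G H h) (htot : ∀ x ∈ G.V ∪ G.E, h x ≠ none)
    (hR : (unmatchedR G H h).Nonempty) : HasCostDecreasingEdit G H h := by
  obtain ⟨y, hy⟩ := hR
  -- `ι` may be finite, but `H` has more objects than `G`, so one of them is fresh for `G`
  obtain ⟨x, -, hx⟩ :=
    exists_mem_notMem_of_card_lt_card (hpi.card_lt_of_mem_unmatchedR htot hy)
  by_cases hV : ∃ y ∈ unmatchedR G H h, y ∈ H.V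
  · obtain ⟨y, hy, hyV⟩ := hV
    exact hasCostDecreasingEdit_of_insV hG hH hpi hx hy hyV
  push Not at hV
  exact hasCostDecreasingEdit_of_insE hG hH hpi hV hx hy
    ((mem_union.mp (mem_filter.mp hy).1).resolve_left (hV y hy))

theorem hasCostDecreasingEdit (hG : IsPGraph G) (hH : IsPGraph H) (hpi : IsPartialIso G H h)
    (hc : pisoCost G H h ≠ 0) : HasCostDecreasingEdit G H h := by
  by_cases hk : ∃ x ∈ G.V ∪ G.E, ∃ k, G.prop x k ≠ (h x).bind (H.prop · k)
  · obtain ⟨x, hx, k, hk⟩ := hk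
    obtain ⟨op, hop, hopG⟩ := exists_applyOp_eq_setProp hx hk
    exact ⟨op, h, hop, by rw [hopG]; exact hpi, by rw [hopG]; exact pisoCost_setProp_lt hx hk⟩
  push Not at hk
  by_cases hL : ∃ x ∈ G.V ∪ G.E, h x = none
  · obtain ⟨x, hx, hhx⟩ := hL
    exact hasCostDecreasingEdit_of_eq_none hG hH hpi hk hx hhx
  push Not at hL
  refine hasCostDecreasingEdit_of_unmatchedR_nonempty hG hH hpi hL
    (nonempty_iff_ne_empty.mpr fun hR => hc ?_)
  exact pisoCost_eq_zero_iff.mpr ⟨fun x hx => ⟨hL x hx, hk x hx⟩, hR⟩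

theorem exists_validScript_length_le (hG : IsPGraph G) (hH : IsPGraph H)
    (hpi : IsPartialIso G H h) :
    ∃ ops, ValidScript G ops ∧ (∃ f, IsIso (applyScript ops G) H f) ∧
      ops.length ≤ pisoCost G H h := by
  induction hc : pisoCost G H h using Nat.strong_induction_on generalizing G h with
  | _ n ih =>
    rcases eq_or_ne n 0 with rfl | hn
    · exact ⟨[], .nil G, isIso_of_pisoCost_eq_zero hG hH hpi hc, le_rfl⟩
    obtain ⟨op, h', hop, hpi', hlt⟩ := hasCostDecreasingEdit hG hH hpi (hc ▸ hn)
    obtain ⟨ops, hvs, hiso, hlen⟩ := ih _ (hc ▸ hlt) (hG.applyOp hop) hpi' rfl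
    exact ⟨op :: ops, .cons hop hvs, hiso, by rw [List.length_cons]; omega⟩

theorem ged_le_pisoCost (hG : IsPGraph G) (hH : IsPGraph H) (hpi : IsPartialIso G H h) :
    GED G H ≤ pisoCost G H h :=
  have ⟨ops, hvs, hiso, hlen⟩ := exists_validScript_length_le hG hH hpi
  (Nat.sInf_le (show ops.length ∈ GEDSet G H from ⟨ops, hvs, hiso, rfl⟩)).trans hlen

end Scripts

end

/-- the graph edit distance equals the minimum cost over all
partial isomorphisms between the two graphs (this minimum exists, since the
empty partial map is a partial isomorphism). -/
theorem ged_eq_min_pisoCost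
    [DecidableEq ι] [DecidableEq K] [DecidableEq D] [Fintype K]
    (G1 G2 : PreGraph ι L K D) (hG1 : IsPGraph G1) (hG2 : IsPGraph G2) :
    {n : ℕ | ∃ h : ι → Option ι, IsPartialIso G1 G2 h ∧ pisoCost G1 G2 h = n}.Nonempty ∧
    GED G1 G2 =
      sInf {n : ℕ | ∃ h : ι → Option ι, IsPartialIso G1 G2 h ∧ pisoCost G1 G2 h = n} := by
  set C := {n : ℕ | ∃ h : ι → Option ι, IsPartialIso G1 G2 h ∧ pisoCost G1 G2 h = n}
  have hne : C.Nonempty := ⟨_, _, isPartialIso_none G1 G2, rfl⟩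
  refine ⟨hne, le_antisymm ?_ ?_⟩
  · obtain ⟨h, hpi, hcost⟩ := Nat.sInf_mem hne
    exact hcost ▸ ged_le_pisoCost hG1 hG2 hpi
  · obtain ⟨ops, hvs, hiso, -⟩ :=
      exists_validScript_length_le hG1 hG2 (isPartialIso_none G1 G2)
    obtain ⟨ops, hvs, ⟨f, hf⟩, hlen⟩ :=
      Nat.sInf_mem (⟨_, ops, hvs, hiso, rfl⟩ : (GEDSet G1 G2).Nonempty)
    obtain ⟨h, hpi, hle⟩ := exists_pisoCost_le_length hG1 hvs hf
    calc sInf C ≤ pisoCost G1 G2 h := Nat.sInf_le ⟨h, hpi, rfl⟩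
      _ ≤ ops.length := hle
      _ = GED G1 G2 := hlen
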